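/- arXiv:1901.01322 — 3 statements merged into one kernel-verified Lean document; each statement's English description precedes it below -/
import Mathlib

section
/- Let $I \subset \mathbb{R}$ be a compact interval containing distinct points $\eta_1, \dots, \eta_n$ and $\mu$, and let $\Lambda_{n-1} = \max_{\xi \in I} \sum_{i=1}^n |\ell_i(\xi)|$ be the Lebesgue constant of the Lagrange basis $\ell_i$ for the nodes $\eta_1, \dots, \eta_n$. Suppose each $\Phi_i : \mathbb{R}^d \to \mathbb{R}^d$ is Lipschitz with constant $L$ and $\Lambda_{n-1} L |I| < 1$. Then there exists a unique polynomial curve $X$ of degree at most $n$ restricted to $I$ satisfying $X(\mu) = x$ and $X'(\eta_i) = \Phi_i(X(\eta_i))$ for all $i$. -/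
/-!
Writing `X'` in Lagrange form and integrating from `μ`, every polynomial curve of degree `≤ n` is
`X t = X μ + ∑ i, G i t • X' (η i)` with `G i t = ∫_μ^t ℓ_i`. Hence collocation solutions
correspond to fixed points of `T v k = x + ∑ i, G i (η k) • Φ i (v i)` acting on node values.
Since `∑ i, |G i s| ≤ Λ |s - μ| ≤ Λ |I|`, the map `T` is a contraction with constant
`Λ L |I| < 1` for the sup distance, and Banach's fixed point theorem gives existence and uniqueness.
-/

open Polynomial Set

/-- A curve `X : ℝ → ℝ^d` is a polynomial curve of degree at most `n` if every
component is (the evaluation of) a polynomial of degree at most `n`. -/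
def IsPolyCurve (d n : ℕ) (X : ℝ → EuclideanSpace ℝ (Fin d)) : Prop :=
  ∃ p : Fin d → Polynomial ℝ,
    (∀ j, (p j).natDegree ≤ n) ∧ ∀ t j, X t j = (p j).eval t

open Finset

namespace Polynomial

variable {K : Type*} [Field K]

noncomputable def antideriv (p : K[X]) : K[X] :=
  ∑ k ∈ range (p.natDegree + 1), C (p.coeff k / (k + 1)) * X ^ (k + 1)

theorem derivative_antideriv [CharZero K] (p : K[X]) : derivative (antideriv p) = p := by
  have hterm : ∀ k ∈ range (p.natDegree + 1),
      derivative (C (p.coeff k / (k + 1)) * X ^ (k + 1) : K[X]) = C (p.coeff k) * X ^ k := by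
    intro k _
    rw [derivative_C_mul_X_pow]
    push_cast
    rw [div_mul_cancel₀ _ (Nat.cast_add_one_ne_zero k)]
  rw [antideriv, derivative_sum, sum_congr rfl hterm]
  conv_rhs => rw [p.as_sum_range' (p.natDegree + 1) (Nat.lt_succ_self _)]
  exact sum_congr rfl fun k _ => C_mul_X_pow_eq_monomial

theorem natDegree_antideriv_le (p : K[X]) : (antideriv p).natDegree ≤ p.natDegree + 1 :=
  natDegree_sum_le_of_forall_le _ _ fun k hk =>
    (natDegree_C_mul_X_pow_le _ _).trans (by simpa using mem_range_succ_iff.mp hk)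

theorem eq_of_derivative_eq_of_eval_eq [CharZero K] {p q : K[X]} (μ : K)
    (hder : derivative p = derivative q) (hval : p.eval μ = q.eval μ) : p = q := by
  have hconst : p - q = C ((p - q).coeff 0) :=
    eq_C_of_natDegree_eq_zero (derivative_eq_zero.mp (by rw [derivative_sub, hder, sub_self]))
  have hcoeff : (p - q).coeff 0 = 0 := by
    simpa [hval] using (congrArg (eval μ) hconst).symm
  rw [← sub_eq_zero, hconst, hcoeff, C_0]

end Polynomial

theorem sum_abs_sub_le_of_hasDerivWithinAt {ι : Type*} [Fintype ι] {f f' : ι → ℝ → ℝ}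
    {s : Set ℝ} {M x y : ℝ} (hs : Convex ℝ s)
    (hf : ∀ i, ∀ t ∈ s, HasDerivWithinAt (f i) (f' i t) s t)
    (hbound : ∀ t ∈ s, ∑ i, |f' i t| ≤ M) (hx : x ∈ s) (hy : y ∈ s) :
    ∑ i, |f i y - f i x| ≤ M * |y - x| := by
  -- Testing against the sign vector of the increments turns the `ℓ¹` norm into a scalar.
  set ε : ι → ℝ := fun i => SignType.sign (f i y - f i x)
  have hε : ∀ i, |ε i| ≤ 1 := fun i => by
    simp only [ε]; generalize SignType.sign (f i y - f i x) = σ; cases σ <;> simp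
  have hmvt := hs.norm_image_sub_le_of_norm_hasDerivWithin_le
    (f := fun t => ∑ i, ε i * f i t) (f' := fun t => ∑ i, ε i * f' i t)
    (fun t ht => HasDerivWithinAt.fun_sum fun i _ => (hf i t ht).const_mul (ε i))
    (fun t ht => calc
      ‖∑ i, ε i * f' i t‖ ≤ ∑ i, |ε i * f' i t| := abs_sum_le_sum_abs _ _
      _ ≤ ∑ i, |f' i t| := sum_le_sum fun i _ => by
          rw [abs_mul]; exact mul_le_of_le_one_left (abs_nonneg _) (hε i)
      _ ≤ M := hbound t ht) hx hy
  calc ∑ i, |f i y - f i x| = ∑ i, ε i * f i y - ∑ i, ε i * f i x := by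
        simp only [← sum_sub_distrib, ← mul_sub, ε, sign_mul_self]
    _ ≤ M * |y - x| := by
        simpa only [Real.norm_eq_abs] using (le_abs_self _).trans hmvt

section Collocation

variable {n : ℕ} (η : Fin n → ℝ) (μ : ℝ)

/-- The polynomial `t ↦ ∫_μ^t ℓ_i`. -/
noncomputable def integratedBasis (i : Fin n) : ℝ[X] :=
  antideriv (Lagrange.basis univ η i) - C ((antideriv (Lagrange.basis univ η i)).eval μ)

theorem derivative_integratedBasis (i : Fin n) :
    derivative (integratedBasis η μ i) = Lagrange.basis univ η i := by
  simp [integratedBasis, derivative_antideriv]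

theorem eval_integratedBasis_self (i : Fin n) : (integratedBasis η μ i).eval μ = 0 := by
  simp [integratedBasis]

variable {η}

theorem natDegree_integratedBasis_le (hη : Function.Injective η) (i : Fin n) :
    (integratedBasis η μ i).natDegree ≤ n := by
  refine (natDegree_sub_le _ _).trans (max_le ((natDegree_antideriv_le _).trans ?_) (by simp))
  rw [Lagrange.natDegree_basis hη.injOn (Finset.mem_univ i), card_univ, Fintype.card_fin]
  have := i.pos
  omega

theorem sum_abs_eval_integratedBasis_le {a b Λ s : ℝ}
    (hΛ : ∀ ξ ∈ Icc a b, ∑ i, |(Lagrange.basis univ η i).eval ξ| ≤ Λ)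
    (hμ : μ ∈ Icc a b) (hs : s ∈ Icc a b) :
    ∑ i, |(integratedBasis η μ i).eval s| ≤ Λ * |s - μ| := by
  have hmvt := sum_abs_sub_le_of_hasDerivWithinAt (convex_Icc a b)
    (f := fun i t => (integratedBasis η μ i).eval t)
    (f' := fun i t => (Lagrange.basis univ η i).eval t)
    (fun i t _ => by
      simpa only [derivative_integratedBasis] using
        ((integratedBasis η μ i).hasDerivAt t).hasDerivWithinAt) hΛ hμ hs
  simpa only [eval_integratedBasis_self, sub_zero] using hmvt

theorem eq_sum_integratedBasis (hη : Function.Injective η) {q : ℝ[X]} (hq : q.natDegree ≤ n) :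
    q = C (q.eval μ) + ∑ i, C ((derivative q).eval (η i)) * integratedBasis η μ i := by
  have hdeg : (derivative q).degree < (univ : Finset (Fin n)).card := by
    rw [card_univ, Fintype.card_fin]
    by_cases hq0 : q = 0
    · simp [hq0]
    · exact (degree_derivative_lt hq0).trans_le (degree_le_of_natDegree_le hq)
  have hinterp := Lagrange.eq_interpolate hη.injOn hdeg
  rw [Lagrange.interpolate_apply] at hinterp
  refine eq_of_derivative_eq_of_eval_eq μ ?_ ?_
  · simpa [derivative_integratedBasis] using hinterp
  · simp [eval_finsetSum, eval_integratedBasis_self]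

variable {E : Type*} [NormedAddCommGroup E] [NormedSpace ℝ E]

variable (η) in
noncomputable def collocationCurve (x : E) (w : Fin n → E) (t : ℝ) : E :=
  x + ∑ i, (integratedBasis η μ i).eval t • w i

theorem collocationCurve_self (x : E) (w : Fin n → E) : collocationCurve η μ x w μ = x := by
  simp [collocationCurve, eval_integratedBasis_self]

theorem hasDerivAt_collocationCurve (x : E) (w : Fin n → E) (t : ℝ) :
    HasDerivAt (collocationCurve η μ x w) (∑ i, (Lagrange.basis univ η i).eval t • w i) t := by
  refine (HasDerivAt.fun_sum fun i _ => ?_).const_add x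
  simpa only [derivative_integratedBasis] using
    ((integratedBasis η μ i).hasDerivAt t).smul_const (w i)

theorem deriv_collocationCurve_node (hη : Function.Injective η) (x : E) (w : Fin n → E)
    (k : Fin n) : deriv (collocationCurve η μ x w) (η k) = w k := by
  rw [(hasDerivAt_collocationCurve μ x w (η k)).deriv, sum_eq_single k]
  · rw [Lagrange.eval_basis_self hη.injOn (Finset.mem_univ k), one_smul]
  · intro i _ hik
    rw [Lagrange.eval_basis_of_ne hik (Finset.mem_univ k), zero_smul]
  · exact fun hk => absurd (Finset.mem_univ k) hk

theorem isPolyCurve_collocationCurve {d : ℕ} (hη : Function.Injective η)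
    (x : EuclideanSpace ℝ (Fin d)) (w : Fin n → EuclideanSpace ℝ (Fin d)) :
    IsPolyCurve d n (collocationCurve η μ x w) := by
  refine ⟨fun j => C (x j) + ∑ i, C (w i j) * integratedBasis η μ i, fun j => ?_, fun t j => ?_⟩
  · refine (natDegree_add_le _ _).trans (max_le (by simp) ?_)
    exact natDegree_sum_le_of_forall_le _ _ fun i _ =>
      (natDegree_C_mul_le _ _).trans (natDegree_integratedBasis_le μ hη i)
  · simp [collocationCurve, eval_finsetSum, mul_comm]

theorem deriv_apply_eq_eval_derivative {d : ℕ} {Y : ℝ → EuclideanSpace ℝ (Fin d)}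
    {p : Fin d → ℝ[X]} (hp : ∀ t j, Y t j = (p j).eval t) (t : ℝ) (j : Fin d) :
    deriv Y t j = (derivative (p j)).eval t := by
  have hY : DifferentiableAt ℝ Y t :=
    (differentiableAt_piLp 2).2 fun j => by simpa only [hp] using (p j).differentiableAt
  have hj := (PiLp.proj 2 (fun _ : Fin d => ℝ) j).hasFDerivAt.comp_hasDerivAt t hY.hasDerivAt
  have hcomp : ⇑(PiLp.proj (𝕜 := ℝ) 2 (fun _ : Fin d => ℝ) j) ∘ Y = fun s => (p j).eval s :=
    funext fun s => hp s j
  rw [hcomp] at hj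
  exact hj.unique ((p j).hasDerivAt t)

theorem IsPolyCurve.eq_collocationCurve {d : ℕ} (hη : Function.Injective η)
    {Y : ℝ → EuclideanSpace ℝ (Fin d)} (hY : IsPolyCurve d n Y) :
    Y = collocationCurve η μ (Y μ) (fun i => deriv Y (η i)) := by
  obtain ⟨p, hdeg, hp⟩ := hY
  funext t
  ext j
  conv_lhs => rw [hp, eq_sum_integratedBasis μ hη (hdeg j)]
  simp [collocationCurve, hp, deriv_apply_eq_eval_derivative hp, eval_finsetSum, mul_comm]

theorem norm_sum_smul_sub_le {ι : Type*} [Fintype ι] {Φ : ι → E → E} {L : ℝ} (hL : 0 ≤ L)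
    (hlip : ∀ i y z, ‖Φ i y - Φ i z‖ ≤ L * ‖y - z‖) (c : ι → ℝ) (v u : ι → E) :
    ‖∑ i, c i • (Φ i (v i) - Φ i (u i))‖ ≤ (∑ i, |c i|) * L * dist v u := by
  calc ‖∑ i, c i • (Φ i (v i) - Φ i (u i))‖
      ≤ ∑ i, |c i| * ‖Φ i (v i) - Φ i (u i)‖ := by
        refine (norm_sum_le _ _).trans_eq (sum_congr rfl fun i _ => ?_)
        rw [norm_smul, Real.norm_eq_abs]
    _ ≤ ∑ i, |c i| * (L * dist v u) := by
        gcongr with i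
        calc ‖Φ i (v i) - Φ i (u i)‖ ≤ L * dist (v i) (u i) := by
              simpa only [dist_eq_norm] using hlip i (v i) (u i)
          _ ≤ L * dist v u := by gcongr; exact dist_le_pi_dist v u i
    _ = (∑ i, |c i|) * L * dist v u := by rw [mul_assoc, sum_mul]

variable (η) in
noncomputable def collocationNodeMap (x : E) (Φ : Fin n → E → E) (v : Fin n → E) : Fin n → E :=
  fun k => collocationCurve η μ x (fun i => Φ i (v i)) (η k)

theorem lipschitzWith_collocationNodeMap {M L : ℝ} (hM : 0 ≤ M)
    (hG : ∀ k, ∑ i, |(integratedBasis η μ i).eval (η k)| ≤ M) {Φ : Fin n → E → E} (hL : 0 ≤ L)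
    (hlip : ∀ i y z, ‖Φ i y - Φ i z‖ ≤ L * ‖y - z‖) (x : E) :
    LipschitzWith (M * L).toNNReal (collocationNodeMap η μ x Φ) := by
  refine LipschitzWith.of_dist_le' fun v u => (dist_pi_le_iff (by positivity)).2 fun k => ?_
  have hdiff : collocationNodeMap η μ x Φ v k - collocationNodeMap η μ x Φ u k =
      ∑ i, (integratedBasis η μ i).eval (η k) • (Φ i (v i) - Φ i (u i)) := by
    simp only [collocationNodeMap, collocationCurve, add_sub_add_left_eq_sub, ← sum_sub_distrib,
      smul_sub]
  rw [dist_eq_norm, hdiff]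
  calc _ ≤ _ := norm_sum_smul_sub_le hL hlip _ v u
    _ ≤ M * L * dist v u := by gcongr; exact hG k

end Collocation

theorem stmt_1_general (d n : ℕ) (a b : ℝ)
    (η : Fin n → ℝ) (hη : Function.Injective η)
    (hηI : ∀ i, η i ∈ Set.Icc a b) (μ : ℝ) (hμ : μ ∈ Set.Icc a b)
    (Φ : Fin n → EuclideanSpace ℝ (Fin d) → EuclideanSpace ℝ (Fin d))
    (L Λ : ℝ) (hL : 0 ≤ L)
    (hlip : ∀ i y z, ‖Φ i y - Φ i z‖ ≤ L * ‖y - z‖)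
    (hΛ : IsGreatest
      ((fun ξ => ∑ i, |(Lagrange.basis Finset.univ η i).eval ξ|) '' Set.Icc a b) Λ)
    (hsmall : Λ * L * (b - a) < 1)
    (x : EuclideanSpace ℝ (Fin d)) :
    ∃ X : ℝ → EuclideanSpace ℝ (Fin d), IsPolyCurve d n X ∧
      X μ = x ∧ (∀ i, deriv X (η i) = Φ i (X (η i))) ∧
      ∀ Y : ℝ → EuclideanSpace ℝ (Fin d), IsPolyCurve d n Y → Y μ = x →
        (∀ i, deriv Y (η i) = Φ i (Y (η i))) →
        ∀ t ∈ Set.Icc a b, Y t = X t := by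
  have hΛbound : ∀ ξ ∈ Icc a b, ∑ i, |(Lagrange.basis univ η i).eval ξ| ≤ Λ :=
    fun ξ hξ => hΛ.2 ⟨ξ, hξ, rfl⟩
  have hΛ0 : 0 ≤ Λ := (sum_nonneg fun i _ => abs_nonneg _).trans (hΛbound μ hμ)
  have hG : ∀ k, ∑ i, |(integratedBasis η μ i).eval (η k)| ≤ Λ * (b - a) := fun k =>
    (sum_abs_eval_integratedBasis_le μ hΛbound hμ (hηI k)).trans
      (mul_le_mul_of_nonneg_left (Real.dist_le_of_mem_Icc (hηI k) hμ) hΛ0)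
  have hT : ContractingWith (Λ * (b - a) * L).toNNReal (collocationNodeMap η μ x Φ) :=
    ⟨Real.toNNReal_lt_one.2 (by linarith),
      lipschitzWith_collocationNodeMap μ (mul_nonneg hΛ0 (by linarith [hμ.1, hμ.2])) hG hL hlip x⟩
  set v := ContractingWith.fixedPoint _ hT
  have hXη : ∀ k, collocationCurve η μ x (fun i => Φ i (v i)) (η k) = v k :=
    congrFun hT.fixedPoint_isFixedPt
  refine ⟨collocationCurve η μ x (fun i => Φ i (v i)), isPolyCurve_collocationCurve μ hη x _,
    collocationCurve_self μ x _, fun i => by rw [deriv_collocationCurve_node μ hη, hXη], ?_⟩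
  intro Y hY hYμ hYη t _
  have hYrep : Y = collocationCurve η μ x (fun i => Φ i (Y (η i))) := by
    simpa only [hYμ, hYη] using hY.eq_collocationCurve μ hη
  have hYv : (fun i => Y (η i)) = v :=
    hT.fixedPoint_unique (funext fun k => (congrFun hYrep (η k)).symm)
  rw [hYrep, ← hYv]

theorem stmt_1 (d n : ℕ) (a b : ℝ) (hab : a ≤ b)
    (η : Fin n → ℝ) (hη : Function.Injective η)
    (hηI : ∀ i, η i ∈ Set.Icc a b) (μ : ℝ) (hμ : μ ∈ Set.Icc a b)
    (Φ : Fin n → EuclideanSpace ℝ (Fin d) → EuclideanSpace ℝ (Fin d))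
    (L Λ : ℝ) (hL : 0 ≤ L)
    (hlip : ∀ i y z, ‖Φ i y - Φ i z‖ ≤ L * ‖y - z‖)
    (hΛ : IsGreatest
      ((fun ξ => ∑ i, |(Lagrange.basis Finset.univ η i).eval ξ|) '' Set.Icc a b) Λ)
    (hsmall : Λ * L * (b - a) < 1)
    (x : EuclideanSpace ℝ (Fin d)) :
    ∃ X : ℝ → EuclideanSpace ℝ (Fin d), IsPolyCurve d n X ∧
      X μ = x ∧ (∀ i, deriv X (η i) = Φ i (X (η i))) ∧
      ∀ Y : ℝ → EuclideanSpace ℝ (Fin d), IsPolyCurve d n Y → Y μ = x →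
        (∀ i, deriv Y (η i) = Φ i (Y (η i))) →
        ∀ t ∈ Set.Icc a b, Y t = X t :=
  stmt_1_general d n a b η hη hηI μ hμ Φ L Λ hL hlip hΛ hsmall x
end

section
/- Let $\mathcal{I}_{n-1}$ denote the Lagrange interpolation operator on $n$ distinct nodes $\eta_1,\dots,\eta_n$ in a compact interval $I$ containing $\mu$, with Lebesgue constant $\Lambda_{n-1}$. Suppose each $\Phi_i : \mathbb{R}^d \to \mathbb{R}^d$ is Lipschitz with constant $L$. Define $F$ on continuous curves $X : I \to \mathbb{R}^d$ by $F[X](\xi) = x + \int_\mu^\xi p_X(\gamma)\, d\gamma$, where $p_X$ is the unique polynomial of degree $\le n-1$ with $p_X(\eta_i) = \Phi_i(X(\eta_i))$. Then for all continuous $X, Y$, $\max_{\xi \in I} |F[X](\xi) - F[Y](\xi)| \le \Lambda_{n-1} L |I| \max_{\xi \in I} |X(\xi) - Y(\xi)|$. -/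
/-!
The interpolant of the coordinates of vectors `r i` is, coordinatewise, the vector-valued
polynomial `γ ↦ ∑ i, ℓᵢ(γ) • r i`. Hence `F[X] - F[Y]` is the integral from `μ` to `ξ` of
`∑ i, ℓᵢ(γ) • (Φᵢ(X(ηᵢ)) - Φᵢ(Y(ηᵢ)))`, whose norm is at most `Λ · L · max |X - Y|` on `I`;
integrating over a subinterval of `I` costs at most the factor `|I|`.
-/

open Polynomial Set MeasureTheory

namespace Lagrange

variable {ι : Type*} [DecidableEq ι] {E : Type*} [NormedAddCommGroup E] [NormedSpace ℝ E]

noncomputable def vectorInterpolant (s : Finset ι) (v : ι → ℝ) (r : ι → E) (γ : ℝ) : E :=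
  ∑ i ∈ s, (Lagrange.basis s v i).eval γ • r i

theorem continuous_vectorInterpolant (s : Finset ι) (v : ι → ℝ) (r : ι → E) :
    Continuous (vectorInterpolant s v r) :=
  continuous_finsetSum _ fun i _ => (Lagrange.basis s v i).continuous.smul continuous_const

theorem vectorInterpolant_sub (s : Finset ι) (v : ι → ℝ) (r r' : ι → E) (γ : ℝ) :
    vectorInterpolant s v r γ - vectorInterpolant s v r' γ =
      vectorInterpolant s v (r - r') γ := by
  simp only [vectorInterpolant, ← Finset.sum_sub_distrib, Pi.sub_apply, smul_sub]

theorem integral_vectorInterpolant_sub (s : Finset ι) (v : ι → ℝ) (r r' : ι → E) (μ ξ : ℝ) :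
    (∫ γ in μ..ξ, vectorInterpolant s v r γ) - ∫ γ in μ..ξ, vectorInterpolant s v r' γ =
      ∫ γ in μ..ξ, vectorInterpolant s v (r - r') γ := by
  rw [← intervalIntegral.integral_sub ((continuous_vectorInterpolant s v r).intervalIntegrable _ _)
    ((continuous_vectorInterpolant s v r').intervalIntegrable _ _)]
  simp only [vectorInterpolant_sub]

theorem norm_vectorInterpolant_le (s : Finset ι) (v : ι → ℝ) {r : ι → E} {M : ℝ}
    (hr : ∀ i ∈ s, ‖r i‖ ≤ M) (γ : ℝ) :
    ‖vectorInterpolant s v r γ‖ ≤ (∑ i ∈ s, |(Lagrange.basis s v i).eval γ|) * M :=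
  calc ‖vectorInterpolant s v r γ‖
      ≤ ∑ i ∈ s, ‖(Lagrange.basis s v i).eval γ • r i‖ := norm_sum_le _ _
    _ = ∑ i ∈ s, |(Lagrange.basis s v i).eval γ| * ‖r i‖ := by
        simp only [norm_smul, Real.norm_eq_abs]
    _ ≤ ∑ i ∈ s, |(Lagrange.basis s v i).eval γ| * M :=
        Finset.sum_le_sum fun i hi => mul_le_mul_of_nonneg_left (hr i hi) (abs_nonneg _)
    _ = (∑ i ∈ s, |(Lagrange.basis s v i).eval γ|) * M := (Finset.sum_mul ..).symm

theorem eval_interpolate_apply {κ : Type*} [Fintype κ] (s : Finset ι) (v : ι → ℝ)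
    (r : ι → EuclideanSpace ℝ κ) (j : κ) (γ : ℝ) :
    (interpolate s v fun i => r i j).eval γ = vectorInterpolant s v r γ j := by
  simp [interpolate_apply, vectorInterpolant, eval_finsetSum, mul_comm]

theorem integral_interpolate_apply {κ : Type*} [Fintype κ] (s : Finset ι) (v : ι → ℝ)
    (r : ι → EuclideanSpace ℝ κ) (j : κ) (μ ξ : ℝ) :
    ∫ γ in μ..ξ, (interpolate s v fun i => r i j).eval γ =
      (∫ γ in μ..ξ, vectorInterpolant s v r γ) j := by
  simp only [eval_interpolate_apply]
  exact (EuclideanSpace.proj (𝕜 := ℝ) j).intervalIntegral_comp_comm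
    ((continuous_vectorInterpolant s v r).intervalIntegrable _ _)

end Lagrange

theorem norm_intervalIntegral_le_of_mem_Icc {E : Type*} [NormedAddCommGroup E]
    [NormedSpace ℝ E] {f : ℝ → E} {a b μ ξ K : ℝ} (hμ : μ ∈ Icc a b) (hξ : ξ ∈ Icc a b)
    (hK : 0 ≤ K) (hf : ∀ γ ∈ Icc a b, ‖f γ‖ ≤ K) :
    ‖∫ γ in μ..ξ, f γ‖ ≤ K * (b - a) :=
  calc ‖∫ γ in μ..ξ, f γ‖ ≤ K * |ξ - μ| :=
        intervalIntegral.norm_integral_le_of_norm_le_const fun γ hγ =>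
          hf γ (uIcc_subset_Icc hμ hξ (uIoc_subset_uIcc hγ))
    _ ≤ K * (b - a) := mul_le_mul_of_nonneg_left (Real.dist_le_of_mem_Icc hξ hμ) hK

theorem stmt_2_general (d n : ℕ) (a b : ℝ)
    (η : Fin n → ℝ)
    (hηI : ∀ i, η i ∈ Set.Icc a b) (μ : ℝ) (hμ : μ ∈ Set.Icc a b)
    (Φ : Fin n → EuclideanSpace ℝ (Fin d) → EuclideanSpace ℝ (Fin d))
    (L Λ : ℝ) (hL : 0 ≤ L)
    (hlip : ∀ i y z, ‖Φ i y - Φ i z‖ ≤ L * ‖y - z‖)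
    (hΛ : IsGreatest
      ((fun ξ => ∑ i, |(Lagrange.basis Finset.univ η i).eval ξ|) '' Set.Icc a b) Λ)
    (x : EuclideanSpace ℝ (Fin d))
    (F : (ℝ → EuclideanSpace ℝ (Fin d)) → ℝ → EuclideanSpace ℝ (Fin d))
    (hF : ∀ X ξ j, F X ξ j = x j +
      ∫ γ in μ..ξ, (Lagrange.interpolate Finset.univ η fun i => Φ i (X (η i)) j).eval γ)
    (X Y : ℝ → EuclideanSpace ℝ (Fin d))
    (C : ℝ) (hC : IsGreatest ((fun ξ => ‖X ξ - Y ξ‖) '' Set.Icc a b) C) :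
    ∀ ξ ∈ Set.Icc a b, ‖F X ξ - F Y ξ‖ ≤ Λ * L * (b - a) * C := by
  intro ξ hξ
  have hΛ0 : 0 ≤ Λ := by
    obtain ⟨_, _, rfl⟩ := hΛ.1
    exact Finset.sum_nonneg fun i _ => abs_nonneg _
  have hC0 : 0 ≤ C := by
    obtain ⟨_, _, rfl⟩ := hC.1
    exact norm_nonneg _
  have hFvec : ∀ Z, F Z ξ = x + ∫ γ in μ..ξ, Lagrange.vectorInterpolant Finset.univ η
      (fun i => Φ i (Z (η i))) γ := fun Z => by
    ext j
    rw [hF, Lagrange.integral_interpolate_apply, PiLp.add_apply]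
  have hnodes : ∀ i ∈ Finset.univ, ‖Φ i (X (η i)) - Φ i (Y (η i))‖ ≤ L * C := fun i _ =>
    (hlip i _ _).trans (mul_le_mul_of_nonneg_left (hC.2 ⟨η i, hηI i, rfl⟩) hL)
  rw [hFvec, hFvec, add_sub_add_left_eq_sub, Lagrange.integral_vectorInterpolant_sub]
  calc _ ≤ Λ * (L * C) * (b - a) :=
        norm_intervalIntegral_le_of_mem_Icc hμ hξ (by positivity) fun γ hγ =>
          (Lagrange.norm_vectorInterpolant_le _ _ hnodes γ).trans
            (mul_le_mul_of_nonneg_right (hΛ.2 ⟨γ, hγ, rfl⟩) (by positivity))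
    _ = Λ * L * (b - a) * C := by ring

theorem stmt_2 (d n : ℕ) (a b : ℝ) (hab : a ≤ b)
    (η : Fin n → ℝ) (hη : Function.Injective η)
    (hηI : ∀ i, η i ∈ Set.Icc a b) (μ : ℝ) (hμ : μ ∈ Set.Icc a b)
    (Φ : Fin n → EuclideanSpace ℝ (Fin d) → EuclideanSpace ℝ (Fin d))
    (L Λ : ℝ) (hL : 0 ≤ L)
    (hlip : ∀ i y z, ‖Φ i y - Φ i z‖ ≤ L * ‖y - z‖)
    (hΛ : IsGreatest
      ((fun ξ => ∑ i, |(Lagrange.basis Finset.univ η i).eval ξ|) '' Set.Icc a b) Λ)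
    (x : EuclideanSpace ℝ (Fin d))
    (F : (ℝ → EuclideanSpace ℝ (Fin d)) → ℝ → EuclideanSpace ℝ (Fin d))
    (hF : ∀ X ξ j, F X ξ j = x j +
      ∫ γ in μ..ξ, (Lagrange.interpolate Finset.univ η fun i => Φ i (X (η i)) j).eval γ)
    (X Y : ℝ → EuclideanSpace ℝ (Fin d)) (hX : Continuous X) (hY : Continuous Y)
    (C : ℝ) (hC : IsGreatest ((fun ξ => ‖X ξ - Y ξ‖) '' Set.Icc a b) C) :
    ∀ ξ ∈ Set.Icc a b, ‖F X ξ - F Y ξ‖ ≤ Λ * L * (b - a) * C :=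
  stmt_2_general d n a b η hηI μ hμ Φ L Λ hL hlip hΛ x F hF X Y C hC
end

section
/- Under the assumptions of the contraction estimate (each $\Phi_i$ Lipschitz with constant $L$ and $\Lambda_{n-1} L |I| < 1$), the fixed point iteration $X^{k+1} = F[X^k]$ with initial constant curve $X^0(\xi) = x$ converges uniformly on $I$ to the unique solution of the interpolated ODE problem $X(\mu) = x$, $X'(\eta_i) = \Phi_i(X(\eta_i))$ for $i = 1, \dots, n$. -/
open Polynomial Set Filter

noncomputable def polyAntideriv (p : ℝ[X]) : ℝ[X] :=
  ∑ k ∈ p.support, C (p.coeff k / (k + 1)) * X ^ (k + 1)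

lemma derivative_polyAntideriv (p : ℝ[X]) : derivative (polyAntideriv p) = p := by
  rw [polyAntideriv, map_sum]
  conv_rhs => rw [p.as_sum_support_C_mul_X_pow]
  refine Finset.sum_congr rfl fun k _ => ?_
  rw [derivative_C_mul, derivative_X_pow, ← mul_assoc, ← C_mul]
  congr 2
  push_cast
  field_simp

lemma natDegree_polyAntideriv_le {p : ℝ[X]} {n : ℕ} (h : p.degree < n) :
    (polyAntideriv p).natDegree ≤ n := by
  refine natDegree_sum_le_of_forall_le _ _ fun k hk => ?_
  have hk_lt : k < n := by
    have := (le_degree_of_mem_supp k hk).trans_lt h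
    exact_mod_cast this
  exact (natDegree_C_mul_X_pow_le _ _).trans hk_lt

lemma integral_eval_derivative (q : ℝ[X]) (a b : ℝ) :
    ∫ γ in a..b, (derivative q).eval γ = q.eval b - q.eval a :=
  intervalIntegral.integral_eq_sub_of_hasDerivAt (fun γ _ => q.hasDerivAt γ)
    ((derivative q).continuous.intervalIntegrable a b)

lemma integral_eval_eq_polyAntideriv (q : ℝ[X]) (a b : ℝ) :
    ∫ γ in a..b, q.eval γ = (polyAntideriv q).eval b - (polyAntideriv q).eval a := by
  simpa only [derivative_polyAntideriv] using integral_eval_derivative (polyAntideriv q) a b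

section Lagrange

variable {ι E F : Type*} [Fintype ι] [DecidableEq ι]
  [NormedAddCommGroup E] [NormedSpace ℝ E] [NormedAddCommGroup F] [NormedSpace ℝ F]

noncomputable def lagrangeInterp (η : ι → ℝ) (w : ι → E) (γ : ℝ) : E :=
  ∑ i, (Lagrange.basis Finset.univ η i).eval γ • w i

noncomputable def lebesgueFunction (η : ι → ℝ) (γ : ℝ) : ℝ :=
  ∑ i, |(Lagrange.basis Finset.univ η i).eval γ|

variable {η : ι → ℝ}

lemma lebesgueFunction_nonneg (γ : ℝ) : 0 ≤ lebesgueFunction η γ :=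
  Finset.sum_nonneg fun _ _ => abs_nonneg _

lemma continuous_lagrangeInterp (w : ι → E) : Continuous (lagrangeInterp η w) :=
  continuous_finsetSum _ fun i _ => (Lagrange.basis _ η i).continuous.smul continuous_const

lemma lagrangeInterp_sub (v w : ι → E) (γ : ℝ) :
    lagrangeInterp η v γ - lagrangeInterp η w γ = lagrangeInterp η (v - w) γ := by
  simp only [lagrangeInterp, ← Finset.sum_sub_distrib, ← smul_sub, Pi.sub_apply]

lemma norm_lagrangeInterp_le (w : ι → E) (γ : ℝ) :
    ‖lagrangeInterp η w γ‖ ≤ lebesgueFunction η γ * ‖w‖ :=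
  calc ‖lagrangeInterp η w γ‖
      ≤ ∑ i, |(Lagrange.basis Finset.univ η i).eval γ| * ‖w i‖ := by
        refine (norm_sum_le _ _).trans_eq (Finset.sum_congr rfl fun i _ => ?_)
        rw [norm_smul, Real.norm_eq_abs]
    _ ≤ ∑ i, |(Lagrange.basis Finset.univ η i).eval γ| * ‖w‖ :=
        Finset.sum_le_sum fun i _ => mul_le_mul_of_nonneg_left (norm_le_pi_norm w i) (abs_nonneg _)
    _ = lebesgueFunction η γ * ‖w‖ := (Finset.sum_mul ..).symm

lemma lagrangeInterp_node (hη : Function.Injective η) (w : ι → E) (i : ι) :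
    lagrangeInterp η w (η i) = w i := by
  rw [lagrangeInterp, Finset.sum_eq_single i, Lagrange.eval_basis_self hη.injOn (Finset.mem_univ i),
    one_smul]
  · intro k _ hki
    rw [Lagrange.eval_basis_of_ne hki (Finset.mem_univ i), zero_smul]
  · exact fun h => (h (Finset.mem_univ i)).elim

lemma map_lagrangeInterp (f : E →L[ℝ] F) (w : ι → E) (γ : ℝ) :
    f (lagrangeInterp η w γ) = lagrangeInterp η (fun i => f (w i)) γ := by
  simp only [lagrangeInterp, map_sum, map_smul]

lemma lagrangeInterp_eq_eval_interpolate (r : ι → ℝ) (γ : ℝ) :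
    lagrangeInterp η r γ = (Lagrange.interpolate Finset.univ η r).eval γ := by
  simp only [lagrangeInterp, Lagrange.interpolate_apply, eval_finsetSum, eval_mul, eval_C,
    smul_eq_mul, mul_comm]

-- With `w i = Φ i (X (η i))` this is the paper's `F[X]`.
noncomputable def interpAntideriv (x : E) (μ : ℝ) (η : ι → ℝ) (w : ι → E) (ξ : ℝ) : E :=
  x + ∫ γ in μ..ξ, lagrangeInterp η w γ

variable {x : E} {μ : ℝ}

@[simp]
lemma interpAntideriv_self (w : ι → E) : interpAntideriv x μ η w μ = x := by
  simp [interpAntideriv]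

lemma hasDerivAt_interpAntideriv [CompleteSpace E] (w : ι → E) (ξ : ℝ) :
    HasDerivAt (interpAntideriv x μ η w) (lagrangeInterp η w ξ) ξ :=
  ((continuous_lagrangeInterp w).integral_hasStrictDerivAt μ ξ).hasDerivAt.const_add x

lemma norm_interpAntideriv_sub_le {a b Λ : ℝ} (hμ : μ ∈ Icc a b)
    (hΛ : ∀ γ ∈ Icc a b, lebesgueFunction η γ ≤ Λ) (v w : ι → E) {ξ : ℝ} (hξ : ξ ∈ Icc a b) :
    ‖interpAntideriv x μ η v ξ - interpAntideriv x μ η w ξ‖ ≤ Λ * (b - a) * ‖v - w‖ := by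
  have hΛ₀ : 0 ≤ Λ := (lebesgueFunction_nonneg μ).trans (hΛ μ hμ)
  have hint : ∀ u : ι → E, IntervalIntegrable (lagrangeInterp η u) MeasureTheory.volume μ ξ :=
    fun u => (continuous_lagrangeInterp u).intervalIntegrable μ ξ
  have hpt : ∀ γ ∈ uIoc μ ξ, ‖lagrangeInterp η (v - w) γ‖ ≤ Λ * ‖v - w‖ := fun γ hγ =>
    (norm_lagrangeInterp_le _ γ).trans <| mul_le_mul_of_nonneg_right
      (hΛ γ (uIcc_subset_Icc hμ hξ (uIoc_subset_uIcc hγ))) (norm_nonneg _)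
  have hlen : |ξ - μ| ≤ b - a := by
    rw [abs_le]; constructor <;> linarith [hμ.1, hμ.2, hξ.1, hξ.2]
  calc ‖interpAntideriv x μ η v ξ - interpAntideriv x μ η w ξ‖
      = ‖∫ γ in μ..ξ, lagrangeInterp η (v - w) γ‖ := by
        simp only [interpAntideriv, add_sub_add_left_eq_sub,
          ← intervalIntegral.integral_sub (hint v) (hint w), lagrangeInterp_sub]
    _ ≤ Λ * ‖v - w‖ * |ξ - μ| := intervalIntegral.norm_integral_le_of_norm_le_const hpt
    _ ≤ Λ * ‖v - w‖ * (b - a) := by gcongr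
    _ = Λ * (b - a) * ‖v - w‖ := by ring

end Lagrange

lemma tendstoUniformlyOn_of_dist_le {ι α β : Type*} [PseudoMetricSpace β] {F : ι → α → β}
    {f : α → β} {p : Filter ι} {s : Set α} {c : ι → ℝ} (hc : Tendsto c p (nhds 0))
    (h : ∀ k, ∀ ξ ∈ s, dist (f ξ) (F k ξ) ≤ c k) : TendstoUniformlyOn F f p s :=
  Metric.tendstoUniformlyOn_iff.2 fun _ hε =>
    (hc.eventually (gt_mem_nhds hε)).mono fun k hk ξ hξ => (h k ξ hξ).trans_lt hk

section Picard

variable {ι E : Type*} [Fintype ι] [NormedAddCommGroup E] {Φ : ι → E → E} {L : ℝ}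

lemma pi_norm_sub_le_of_lipschitz (hL : 0 ≤ L) (hΦ : ∀ i y z, ‖Φ i y - Φ i z‖ ≤ L * ‖y - z‖)
    (v w : ι → E) : ‖(fun i => Φ i (v i)) - fun i => Φ i (w i)‖ ≤ L * ‖v - w‖ :=
  (pi_norm_le_iff_of_nonneg (by positivity)).2 fun i =>
    (hΦ i _ _).trans (mul_le_mul_of_nonneg_left (norm_le_pi_norm (v - w) i) hL)

variable [DecidableEq ι] [NormedSpace ℝ E] {η : ι → ℝ} {x : E} {μ a b Λ : ℝ}

lemma norm_interpAntideriv_comp_sub_le (hμ : μ ∈ Icc a b)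
    (hΛ : ∀ γ ∈ Icc a b, lebesgueFunction η γ ≤ Λ) (hL : 0 ≤ L)
    (hΦ : ∀ i y z, ‖Φ i y - Φ i z‖ ≤ L * ‖y - z‖) (v w : ι → E) {ξ : ℝ} (hξ : ξ ∈ Icc a b) :
    ‖interpAntideriv x μ η (fun i => Φ i (v i)) ξ - interpAntideriv x μ η (fun i => Φ i (w i)) ξ‖
      ≤ Λ * L * (b - a) * ‖v - w‖ := by
  have hΛ₀ : 0 ≤ Λ := (lebesgueFunction_nonneg μ).trans (hΛ μ hμ)
  have hab : 0 ≤ b - a := sub_nonneg.2 (hμ.1.trans hμ.2)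
  calc _ ≤ Λ * (b - a) * ‖(fun i => Φ i (v i)) - fun i => Φ i (w i)‖ :=
        norm_interpAntideriv_sub_le hμ hΛ _ _ hξ
    _ ≤ Λ * (b - a) * (L * ‖v - w‖) := by gcongr; exact pi_norm_sub_le_of_lipschitz hL hΦ v w
    _ = Λ * L * (b - a) * ‖v - w‖ := by ring

noncomputable def picardNodeMap (x : E) (μ : ℝ) (η : ι → ℝ) (Φ : ι → E → E) (v : ι → E) :
    ι → E :=
  fun i => interpAntideriv x μ η (fun k => Φ k (v k)) (η i)

lemma contractingWith_picardNodeMap (hηI : ∀ i, η i ∈ Icc a b) (hμ : μ ∈ Icc a b)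
    (hΛ : ∀ γ ∈ Icc a b, lebesgueFunction η γ ≤ Λ) (hL : 0 ≤ L)
    (hΦ : ∀ i y z, ‖Φ i y - Φ i z‖ ≤ L * ‖y - z‖) (hsmall : Λ * L * (b - a) < 1) :
    ContractingWith (Λ * L * (b - a)).toNNReal (picardNodeMap x μ η Φ) := by
  refine ⟨Real.toNNReal_lt_one.2 hsmall, LipschitzWith.of_dist_le' fun v w => ?_⟩
  have hΛ₀ : 0 ≤ Λ := (lebesgueFunction_nonneg μ).trans (hΛ μ hμ)
  have hab : 0 ≤ b - a := sub_nonneg.2 (hμ.1.trans hμ.2)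
  rw [dist_eq_norm, dist_eq_norm]
  exact (pi_norm_le_iff_of_nonneg (by positivity)).2 fun i =>
    norm_interpAntideriv_comp_sub_le hμ hΛ hL hΦ v w (hηI i)

lemma tendstoUniformlyOn_interpAntideriv_comp {κ : Type*} {p : Filter κ} (hμ : μ ∈ Icc a b)
    (hΛ : ∀ γ ∈ Icc a b, lebesgueFunction η γ ≤ Λ) (hL : 0 ≤ L)
    (hΦ : ∀ i y z, ‖Φ i y - Φ i z‖ ≤ L * ‖y - z‖) {u : κ → ι → E} {v : ι → E}
    (hu : Tendsto u p (nhds v)) :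
    TendstoUniformlyOn (fun k => interpAntideriv x μ η fun i => Φ i (u k i))
      (interpAntideriv x μ η fun i => Φ i (v i)) p (Icc a b) := by
  refine tendstoUniformlyOn_of_dist_le (c := fun k => Λ * L * (b - a) * dist v (u k)) ?_
    fun k ξ hξ => ?_
  · simpa using ((tendsto_const_nhds (x := v)).dist hu).const_mul (Λ * L * (b - a))
  · rw [dist_eq_norm, dist_eq_norm]
    exact norm_interpAntideriv_comp_sub_le hμ hΛ hL hΦ v (u k) hξ

end Picard

section PolyCurve

variable {ι : Type*} [Fintype ι] [DecidableEq ι] {d : ℕ} {η : ι → ℝ}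

lemma interpAntideriv_apply (x : EuclideanSpace ℝ (Fin d)) (μ : ℝ)
    (w : ι → EuclideanSpace ℝ (Fin d)) (ξ : ℝ) (j : Fin d) :
    interpAntideriv x μ η w ξ j =
      x j + ∫ γ in μ..ξ, (Lagrange.interpolate Finset.univ η fun i => w i j).eval γ := by
  have hcomm := (EuclideanSpace.proj (𝕜 := ℝ) j).intervalIntegral_comp_comm
    ((continuous_lagrangeInterp (η := η) w).intervalIntegrable (μ := MeasureTheory.volume) μ ξ)
  calc interpAntideriv x μ η w ξ j
      = x j + EuclideanSpace.proj j (∫ γ in μ..ξ, lagrangeInterp η w γ) := rfl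
    _ = _ := by simp only [← hcomm, map_lagrangeInterp, lagrangeInterp_eq_eval_interpolate]; rfl

lemma isPolyCurve_interpAntideriv (hη : Function.Injective η) (x : EuclideanSpace ℝ (Fin d))
    (μ : ℝ) (w : ι → EuclideanSpace ℝ (Fin d)) :
    IsPolyCurve d (Fintype.card ι) (interpAntideriv x μ η w) := by
  set A : Fin d → ℝ[X] := fun j =>
    polyAntideriv (Lagrange.interpolate Finset.univ η fun i => w i j)
  refine ⟨fun j => C (x j - (A j).eval μ) + A j, fun j => ?_, fun ξ j => ?_⟩
  · refine (natDegree_add_le _ _).trans (max_le (by simp) (natDegree_polyAntideriv_le ?_))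
    have h := Lagrange.degree_interpolate_lt (s := Finset.univ) (fun i => w i j) hη.injOn
    rwa [Finset.card_univ] at h
  · rw [interpAntideriv_apply, integral_eval_eq_polyAntideriv, eval_add, eval_C]
    ring

lemma deriv_apply_of_forall_eq_eval {Y : ℝ → EuclideanSpace ℝ (Fin d)} {p : Fin d → ℝ[X]}
    (hY : ∀ t j, Y t j = (p j).eval t) (s : ℝ) (j : Fin d) :
    deriv Y s j = (derivative (p j)).eval s := by
  have hdiff : DifferentiableAt ℝ Y s :=
    (differentiableAt_piLp 2).2 fun k => by simp only [hY]; exact (p k).differentiableAt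
  have h := (PiLp.hasFDerivAt_apply 2 (Y s) j).comp_hasDerivAt s hdiff.hasDerivAt
  simp only [Function.comp_def, hY] at h
  exact h.unique ((p j).hasDerivAt s)

lemma IsPolyCurve.eq_interpAntideriv {Y : ℝ → EuclideanSpace ℝ (Fin d)}
    (hY : IsPolyCurve d (Fintype.card ι) Y) (hη : Function.Injective η) (μ t : ℝ) :
    Y t = interpAntideriv (Y μ) μ η (fun i => deriv Y (η i)) t := by
  obtain ⟨p, hdeg, hp⟩ := hY
  have hinterp : ∀ j, derivative (p j) =
      Lagrange.interpolate Finset.univ η fun i => deriv Y (η i) j := by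
    intro j
    have hlt : (derivative (p j)).degree < (Finset.univ : Finset ι).card := by
      by_cases hpj : p j = 0
      · simp [hpj]
      · exact (degree_derivative_lt hpj).trans_le
          (degree_le_natDegree.trans (by exact_mod_cast hdeg j))
    rw [Lagrange.eq_interpolate hη.injOn hlt]
    simp only [deriv_apply_of_forall_eq_eval hp]
  ext j
  rw [interpAntideriv_apply, ← hinterp, integral_eval_derivative, hp, hp]
  ring

lemma IsPolyCurve.eq_interpAntideriv_of_deriv_eq {Y : ℝ → EuclideanSpace ℝ (Fin d)}
    (hY : IsPolyCurve d (Fintype.card ι) Y) (hη : Function.Injective η) (μ : ℝ)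
    {Φ : ι → EuclideanSpace ℝ (Fin d) → EuclideanSpace ℝ (Fin d)}
    (hYd : ∀ i, deriv Y (η i) = Φ i (Y (η i))) :
    Y = interpAntideriv (Y μ) μ η fun i => Φ i (Y (η i)) := by
  funext t
  rw [hY.eq_interpAntideriv hη μ t]
  simp only [hYd]

end PolyCurve

theorem stmt_3_general (d n : ℕ) (a b : ℝ)
    (η : Fin n → ℝ) (hη : Function.Injective η)
    (hηI : ∀ i, η i ∈ Set.Icc a b) (μ : ℝ) (hμ : μ ∈ Set.Icc a b)
    (Φ : Fin n → EuclideanSpace ℝ (Fin d) → EuclideanSpace ℝ (Fin d))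
    (L Λ : ℝ) (hL : 0 ≤ L)
    (hlip : ∀ i y z, ‖Φ i y - Φ i z‖ ≤ L * ‖y - z‖)
    (hΛ : IsGreatest
      ((fun ξ => ∑ i, |(Lagrange.basis Finset.univ η i).eval ξ|) '' Set.Icc a b) Λ)
    (hsmall : Λ * L * (b - a) < 1)
    (x : EuclideanSpace ℝ (Fin d))
    (F : (ℝ → EuclideanSpace ℝ (Fin d)) → ℝ → EuclideanSpace ℝ (Fin d))
    (hF : ∀ X ξ j, F X ξ j = x j +
      ∫ γ in μ..ξ, (Lagrange.interpolate Finset.univ η fun i => Φ i (X (η i)) j).eval γ)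
    (Xit : ℕ → ℝ → EuclideanSpace ℝ (Fin d))
    (h0 : ∀ ξ, Xit 0 ξ = x) (hsucc : ∀ k, Xit (k + 1) = F (Xit k)) :
    ∃ X : ℝ → EuclideanSpace ℝ (Fin d), IsPolyCurve d n X ∧
      X μ = x ∧ (∀ i, deriv X (η i) = Φ i (X (η i))) ∧
      TendstoUniformlyOn Xit X atTop (Set.Icc a b) ∧
      ∀ Y : ℝ → EuclideanSpace ℝ (Fin d), IsPolyCurve d n Y → Y μ = x →
        (∀ i, deriv Y (η i) = Φ i (Y (η i))) →
        ∀ t ∈ Set.Icc a b, Y t = X t := by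
  have hΛ' : ∀ γ ∈ Icc a b, lebesgueFunction η γ ≤ Λ := fun γ hγ => hΛ.2 ⟨γ, hγ, rfl⟩
  have hF' : ∀ X, F X = interpAntideriv x μ η fun i => Φ i (X (η i)) := fun X =>
    funext fun ξ => by ext j; rw [hF, interpAntideriv_apply]
  have hK := contractingWith_picardNodeMap (x := x) hηI hμ hΛ' hL hlip hsmall
  set G := picardNodeMap x μ η Φ
  set v := ContractingWith.fixedPoint G hK
  have hnodes : ∀ k, (fun i => Xit k (η i)) = G^[k] fun _ => x := by
    intro k
    induction k with
    | zero => exact funext fun i => h0 (η i)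
    | succ k ih => rw [Function.iterate_succ_apply', ← ih, hsucc, hF']; rfl
  have hiter : ∀ k, Xit (k + 1) = interpAntideriv x μ η fun i => Φ i ((G^[k] fun _ => x) i) :=
    fun k => by rw [hsucc, hF', ← hnodes]
  refine ⟨interpAntideriv x μ η fun i => Φ i (v i),
    by simpa using isPolyCurve_interpAntideriv hη x μ fun i => Φ i (v i),
    interpAntideriv_self _, fun i => ?_, ?_, ?_⟩
  · rw [(hasDerivAt_interpAntideriv _ _).deriv, lagrangeInterp_node hη]
    exact congrArg (Φ i) (congrFun hK.fixedPoint_isFixedPt i).symm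
  · have hshift : TendstoUniformlyOn (fun k => Xit (k + 1))
        (interpAntideriv x μ η fun i => Φ i (v i)) atTop (Icc a b) := by
      simpa only [hiter] using tendstoUniformlyOn_interpAntideriv_comp hμ hΛ' hL hlip
        (hK.tendsto_iterate_fixedPoint fun _ => x)
    rwa [← map_add_atTop_eq_nat 1]
  · rintro Y hY hYμ hYd t -
    have hYeq := (by simpa using hY : IsPolyCurve d (Fintype.card (Fin n)) Y)
      |>.eq_interpAntideriv_of_deriv_eq hη μ hYd
    rw [hYμ] at hYeq
    have hYv : (fun i => Y (η i)) = v :=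
      hK.fixedPoint_unique (funext fun i => (congrFun hYeq (η i)).symm)
    rw [congrFun hYeq t, ← hYv]

theorem stmt_3 (d n : ℕ) (a b : ℝ) (hab : a ≤ b)
    (η : Fin n → ℝ) (hη : Function.Injective η)
    (hηI : ∀ i, η i ∈ Set.Icc a b) (μ : ℝ) (hμ : μ ∈ Set.Icc a b)
    (Φ : Fin n → EuclideanSpace ℝ (Fin d) → EuclideanSpace ℝ (Fin d))
    (L Λ : ℝ) (hL : 0 ≤ L)
    (hlip : ∀ i y z, ‖Φ i y - Φ i z‖ ≤ L * ‖y - z‖)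
    (hΛ : IsGreatest
      ((fun ξ => ∑ i, |(Lagrange.basis Finset.univ η i).eval ξ|) '' Set.Icc a b) Λ)
    (hsmall : Λ * L * (b - a) < 1)
    (x : EuclideanSpace ℝ (Fin d))
    (F : (ℝ → EuclideanSpace ℝ (Fin d)) → ℝ → EuclideanSpace ℝ (Fin d))
    (hF : ∀ X ξ j, F X ξ j = x j +
      ∫ γ in μ..ξ, (Lagrange.interpolate Finset.univ η fun i => Φ i (X (η i)) j).eval γ)
    (Xit : ℕ → ℝ → EuclideanSpace ℝ (Fin d))
    (h0 : ∀ ξ, Xit 0 ξ = x) (hsucc : ∀ k, Xit (k + 1) = F (Xit k)) :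
    ∃ X : ℝ → EuclideanSpace ℝ (Fin d), IsPolyCurve d n X ∧
      X μ = x ∧ (∀ i, deriv X (η i) = Φ i (X (η i))) ∧
      TendstoUniformlyOn Xit X atTop (Set.Icc a b) ∧
      ∀ Y : ℝ → EuclideanSpace ℝ (Fin d), IsPolyCurve d n Y → Y μ = x →
        (∀ i, deriv Y (η i) = Φ i (Y (η i))) →
        ∀ t ∈ Set.Icc a b, Y t = X t :=
  stmt_3_general d n a b η hη hηI μ hμ Φ L Λ hL hlip hΛ hsmall x F hF Xit h0 hsucc
end
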